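/- arXiv:2603.09248 — 4 statements merged into one kernel-verified Lean document; each statement's English description precedes it below -/
import Mathlib

section
/- Let $D \subset \mathbb{R}^2$ be the open unit disc and let $P_0(x,z) = \frac{1}{2\pi}\frac{1-|x|^2}{|x-z|^2}$ be the Poisson kernel for $x \in D$, $z \in \partial D$. Suppose $p, \widetilde{p} \in D$, $a, b \in \mathbb{R}$ with $a, b \neq 0$, and suppose there exist three distinct points $z_1, z_2, z_3 \in \partial D$ such that $a\,P_0(p, z_\ell) = b\,P_0(\widetilde{p}, z_\ell)$ for $\ell = 1,2,3$. Then $p = \widetilde{p}$. -/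
/-!
Clearing denominators, the hypothesis says `A ‖p̃ - z‖² = B ‖p - z‖²` at the three points, where
`A = a (1 - ‖p‖²)` and `B = b (1 - ‖p̃‖²)`. On the unit circle `‖x - z‖² = ‖x‖² + 1 - 2 ⟪x, z⟫`,
so this is the affine condition `⟪A p̃ - B p, z⟫ = c` in `z`, with `c` a constant. Three distinct
points of a circle are affinely independent and span the plane, which forces `A p̃ = B p` and
`c = 0`. Then `p̃ = t p` with `t = B / A`, and `c = 0` reads `(t - 1) (t ‖p‖² - 1) = 0`; the second
factor cannot vanish, since then `‖p̃‖² = t² ‖p‖² = t > 1`. Hence `t = 1`.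
-/

open scoped RealInnerProductSpace

/-- Poisson kernel of the unit disc in `ℝ²`. -/
noncomputable def poissonDisc (x z : EuclideanSpace ℝ (Fin 2)) : ℝ :=
  (1 / (2 * Real.pi)) * (1 - ‖x‖ ^ 2) / ‖x - z‖ ^ 2

open Module EuclideanGeometry

theorem vectorSpan_range_eq_top_of_cospherical {V P : Type*} [NormedAddCommGroup V]
    [InnerProductSpace ℝ V] [MetricSpace P] [NormedAddTorsor V P] [FiniteDimensional ℝ V]
    (hV : finrank ℝ V = 2) {s : Set P} (hs : Cospherical s) {z : Fin 3 → P}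
    (hzs : Set.range z ⊆ s) (hz : Function.Injective z) :
    vectorSpan ℝ (Set.range z) = ⊤ :=
  (hs.affineIndependent hzs hz).vectorSpan_eq_top_of_card_eq_finrank_add_one (by simp [hV])

theorem eq_zero_of_inner_const_of_vectorSpan_eq_top {V : Type*} [NormedAddCommGroup V]
    [InnerProductSpace ℝ V] {s : Set V} (hs : vectorSpan ℝ s = ⊤) {v : V}
    (hv : ∀ x ∈ s, ∀ y ∈ s, ⟪v, x⟫ = ⟪v, y⟫) : v = 0 := by
  have hker : vectorSpan ℝ s ≤ LinearMap.ker (innerₛₗ ℝ v) := by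
    rw [vectorSpan_def, Submodule.span_le]
    rintro _ ⟨x, hx, y, hy, rfl⟩
    simp [inner_sub_right, hv x hx y hy]
  have hvv : v ∈ LinearMap.ker (innerₛₗ ℝ v) := hker (hs ▸ Submodule.mem_top)
  exact inner_self_eq_zero.mp hvv

theorem inner_smul_sub_smul_of_mul_norm_sub_sq_eq {E : Type*} [NormedAddCommGroup E]
    [InnerProductSpace ℝ E] {p q z : E} (hz : ‖z‖ = 1) {A B : ℝ}
    (h : A * ‖q - z‖ ^ 2 = B * ‖p - z‖ ^ 2) :
    ⟪A • q - B • p, z⟫ = (A * (‖q‖ ^ 2 + 1) - B * (‖p‖ ^ 2 + 1)) / 2 := by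
  rw [norm_sub_sq_real, norm_sub_sq_real, hz] at h
  rw [inner_sub_left, real_inner_smul_left, real_inner_smul_left]
  linear_combination -h / 2

theorem eq_one_of_sq_mul_add_one_eq {t r : ℝ} (hr₀ : 0 ≤ r) (hr₁ : r < 1) (ht : t ^ 2 * r < 1)
    (h : t ^ 2 * r + 1 = t * (r + 1)) : t = 1 := by
  have hfac : (t - 1) * (t * r - 1) = 0 := by linear_combination h
  rcases mul_eq_zero.mp hfac with h1 | h1
  · linarith
  · nlinarith

theorem eq_of_smul_eq_smul_of_mul_norm_sq_add_one_eq {E : Type*} [NormedAddCommGroup E]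
    [NormedSpace ℝ E] {p q : E} (hp : ‖p‖ < 1) (hq : ‖q‖ < 1) {A B : ℝ} (hA : A ≠ 0)
    (hsmul : A • q = B • p) (hnorm : A * (‖q‖ ^ 2 + 1) = B * (‖p‖ ^ 2 + 1)) : p = q := by
  obtain ⟨t, rfl⟩ : ∃ t, B = A * t := ⟨A⁻¹ * B, by field_simp⟩
  have hqt : q = t • p := smul_right_injective E hA (by simpa only [mul_smul] using hsmul)
  have hnq : ‖q‖ ^ 2 = t ^ 2 * ‖p‖ ^ 2 := by rw [hqt, norm_smul, mul_pow, Real.norm_eq_abs, sq_abs]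
  have ht : t = 1 := by
    refine eq_one_of_sq_mul_add_one_eq (sq_nonneg ‖p‖) ?_ ?_ ?_
    · nlinarith [norm_nonneg p]
    · nlinarith [norm_nonneg q]
    · rw [hnq, mul_assoc] at hnorm
      exact mul_left_cancel₀ hA hnorm
  rw [hqt, ht, one_smul]

theorem mul_poissonDisc_eq_mul_poissonDisc_iff {p q z : EuclideanSpace ℝ (Fin 2)} {a b : ℝ}
    (hp : p ≠ z) (hq : q ≠ z) :
    a * poissonDisc p z = b * poissonDisc q z ↔
      a * (1 - ‖p‖ ^ 2) * ‖q - z‖ ^ 2 = b * (1 - ‖q‖ ^ 2) * ‖p - z‖ ^ 2 := by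
  have hpz : ‖p - z‖ ≠ 0 := norm_ne_zero_iff.2 (sub_ne_zero.2 hp)
  have hqz : ‖q - z‖ ≠ 0 := norm_ne_zero_iff.2 (sub_ne_zero.2 hq)
  unfold poissonDisc
  field_simp

theorem poisson_disc_three_point_rigidity_general
    (p ptilde : EuclideanSpace ℝ (Fin 2))
    (hp : ‖p‖ < 1) (hptilde : ‖ptilde‖ < 1)
    (a b : ℝ) (ha : a ≠ 0)
    (z : Fin 3 → EuclideanSpace ℝ (Fin 2))
    (hz : ∀ ℓ, ‖z ℓ‖ = 1)
    (hdist : Function.Injective z)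
    (heq : ∀ ℓ, a * poissonDisc p (z ℓ) = b * poissonDisc ptilde (z ℓ)) :
    p = ptilde := by
  set A := a * (1 - ‖p‖ ^ 2)
  set B := b * (1 - ‖ptilde‖ ^ 2)
  set c := (A * (‖ptilde‖ ^ 2 + 1) - B * (‖p‖ ^ 2 + 1)) / 2
  have hA : A ≠ 0 := mul_ne_zero ha (by nlinarith [norm_nonneg p])
  have hne : ∀ {x}, ‖x‖ < 1 → ∀ ℓ, x ≠ z ℓ := fun hx ℓ => ne_of_apply_ne norm (hz ℓ ▸ hx.ne)
  have hinner : ∀ ℓ, ⟪A • ptilde - B • p, z ℓ⟫ = c := fun ℓ =>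
    inner_smul_sub_smul_of_mul_norm_sub_sq_eq (hz ℓ)
      ((mul_poissonDisc_eq_mul_poissonDisc_iff (hne hp ℓ) (hne hptilde ℓ)).1 (heq ℓ))
  have hspan : vectorSpan ℝ (Set.range z) = ⊤ :=
    vectorSpan_range_eq_top_of_cospherical finrank_euclideanSpace_fin
      ⟨0, 1, by rintro _ ⟨ℓ, rfl⟩; simpa using hz ℓ⟩ subset_rfl hdist
  have hv : A • ptilde - B • p = 0 := eq_zero_of_inner_const_of_vectorSpan_eq_top hspan
    (by rintro _ ⟨i, rfl⟩ _ ⟨j, rfl⟩; rw [hinner, hinner])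
  have hc : c = 0 := by rw [← hinner 0, hv, inner_zero_left]
  exact eq_of_smul_eq_smul_of_mul_norm_sq_add_one_eq hp hptilde hA (sub_eq_zero.1 hv)
    (by unfold c at hc; linarith)

/-- Three-point rigidity of the Poisson kernel on the unit disc. -/
theorem poisson_disc_three_point_rigidity
    (p ptilde : EuclideanSpace ℝ (Fin 2))
    (hp : ‖p‖ < 1) (hptilde : ‖ptilde‖ < 1)
    (a b : ℝ) (ha : a ≠ 0) (hb : b ≠ 0)
    (z : Fin 3 → EuclideanSpace ℝ (Fin 2))
    (hz : ∀ ℓ, ‖z ℓ‖ = 1)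
    (hdist : Function.Injective z)
    (heq : ∀ ℓ, a * poissonDisc p (z ℓ) = b * poissonDisc ptilde (z ℓ)) :
    p = ptilde :=
  poisson_disc_three_point_rigidity_general p ptilde hp hptilde a b ha z hz hdist heq
end

section
/- Let $P(x,z) = \frac{1}{\omega_{d-1}} \frac{1 - |x|^2}{|x - z|^d}$ be the Poisson kernel for the unit ball in $\mathbb{R}^d$ ($d \geq 2$), where $\omega_{d-1}$ is the surface area of the unit sphere. Suppose $p, \widetilde{p}$ lie in the open unit ball, $a, b$ are nonzero reals, and $z_1, \ldots, z_{d+1}$ are points on the unit sphere that do not all lie on a common affine hyperplane of $\mathbb{R}^d$. If $a\,P(p, z_\ell) = b\,P(\widetilde{p}, z_\ell)$ for all $\ell = 1, \ldots, d+1$, then $p = \widetilde{p}$. -/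
open scoped RealInnerProductSpace

/-- Poisson kernel of the unit ball in `ℝᵈ` with surface constant `ω`. -/
noncomputable def poissonBall (d : ℕ) (ω : ℝ) (x z : EuclideanSpace ℝ (Fin d)) : ℝ :=
  (1 / ω) * (1 - ‖x‖ ^ 2) / ‖x - z‖ ^ d

/-
Clearing denominators, `a P(p, z) = b P(p̃, z)` says that the ratio `‖p̃ - z‖ / ‖p - z‖` takes
the same value `s` at every `z = z_ℓ`. Expanding `‖p̃ - z‖² = s² ‖p - z‖²` with `‖z‖ = 1` turns
this into an affine equation `⟪z, s² p - p̃⟫ = c`, so the points `z_ℓ` lie on a hyperplane unless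
`p̃ = s² p`. Comparing norms then leaves `s² = 1` or `s² = 1 / ‖p‖²`, and the latter puts `p̃`
outside the ball.
-/

lemma norm_sub_pos_of_norm_lt_one {E : Type*} [SeminormedAddCommGroup E] {x z : E}
    (hx : ‖x‖ < 1) (hz : ‖z‖ = 1) : 0 < ‖x - z‖ := by
  have := norm_sub_norm_le z x
  rw [norm_sub_rev] at this
  linarith

lemma norm_sub_div_pow_eq_of_mul_poissonBall_eq {d : ℕ} {ω a b : ℝ} (hω : ω ≠ 0) (ha : a ≠ 0)
    {p q z : EuclideanSpace ℝ (Fin d)} (hp : ‖p‖ < 1) (hq : ‖q‖ < 1) (hz : ‖z‖ = 1)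
    (h : a * poissonBall d ω p z = b * poissonBall d ω q z) :
    (‖q - z‖ / ‖p - z‖) ^ d = b * (1 - ‖q‖ ^ 2) / (a * (1 - ‖p‖ ^ 2)) := by
  have hpz := (norm_sub_pos_of_norm_lt_one hp hz).ne'
  have hqz := (norm_sub_pos_of_norm_lt_one hq hz).ne'
  have hp' : 1 - ‖p‖ ^ 2 ≠ 0 := by nlinarith [norm_nonneg p]
  unfold poissonBall at h
  field_simp at h
  rw [div_pow, div_eq_div_iff (pow_ne_zero d hpz) (mul_ne_zero ha hp')]
  linear_combination h

lemma norm_sub_div_eq_of_mul_poissonBall_eq {d : ℕ} (hd : d ≠ 0) {ω a b : ℝ} (hω : ω ≠ 0)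
    (ha : a ≠ 0) {p q z z' : EuclideanSpace ℝ (Fin d)} (hp : ‖p‖ < 1) (hq : ‖q‖ < 1)
    (hz : ‖z‖ = 1) (hz' : ‖z'‖ = 1)
    (h : a * poissonBall d ω p z = b * poissonBall d ω q z)
    (h' : a * poissonBall d ω p z' = b * poissonBall d ω q z') :
    ‖q - z‖ / ‖p - z‖ = ‖q - z'‖ / ‖p - z'‖ :=
  (pow_left_inj₀ (by positivity) (by positivity) hd).mp <| by
    rw [norm_sub_div_pow_eq_of_mul_poissonBall_eq hω ha hp hq hz h,
      norm_sub_div_pow_eq_of_mul_poissonBall_eq hω ha hp hq hz' h']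

section InnerProductSpace

variable {E : Type*} [NormedAddCommGroup E] [InnerProductSpace ℝ E]

lemma inner_smul_sub_eq_of_norm_sub_eq_mul {p q z : E} {s : ℝ} (hz : ‖z‖ = 1)
    (h : ‖q - z‖ = s * ‖p - z‖) :
    ⟪z, s ^ 2 • p - q⟫ = (s ^ 2 * (‖p‖ ^ 2 + 1) - (‖q‖ ^ 2 + 1)) / 2 := by
  have hsq : ‖q - z‖ ^ 2 = s ^ 2 * ‖p - z‖ ^ 2 := by rw [h]; ring
  rw [norm_sub_sq_real, norm_sub_sq_real, hz, real_inner_comm z q, real_inner_comm z p] at hsq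
  rw [inner_sub_right, real_inner_smul_right]
  linear_combination hsq / 2

/-- The other root `μ = 1 / ‖p‖²` of the norm condition corresponds to the inversion
`p / ‖p‖²` of `p` in the unit sphere, which lies outside the ball. -/
lemma eq_of_eq_smul_of_norm_lt_one {p q : E} {μ : ℝ} (hp : ‖p‖ < 1) (hq : ‖q‖ < 1)
    (hμ : 0 < μ) (hqp : q = μ • p) (hnorm : μ * (‖p‖ ^ 2 + 1) = ‖q‖ ^ 2 + 1) : q = p := by
  have hnq : ‖q‖ = μ * ‖p‖ := by rw [hqp, norm_smul, Real.norm_of_nonneg hμ.le]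
  rw [hnq] at hnorm hq
  have hfac : (μ - 1) * (1 - μ * ‖p‖ ^ 2) = 0 := by linear_combination hnorm
  rcases mul_eq_zero.mp hfac with hμ1 | hinv
  · rw [hqp, sub_eq_zero.mp hμ1, one_smul]
  · nlinarith [norm_nonneg p]

end InnerProductSpace

theorem poisson_ball_rigidity_general {d : ℕ}
    (ω : ℝ) (hω : 0 < ω)
    (p ptilde : EuclideanSpace ℝ (Fin d))
    (hp : ‖p‖ < 1) (hptilde : ‖ptilde‖ < 1)
    (a b : ℝ) (ha : a ≠ 0)
    (z : Fin (d + 1) → EuclideanSpace ℝ (Fin d))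
    (hz : ∀ ℓ, ‖z ℓ‖ = 1)
    (hnoplane : ¬ ∃ v : EuclideanSpace ℝ (Fin d), v ≠ 0 ∧ ∃ c : ℝ,
      ∀ ℓ, ⟪z ℓ, v⟫ = c)
    (heq : ∀ ℓ, a * poissonBall d ω p (z ℓ) = b * poissonBall d ω ptilde (z ℓ)) :
    p = ptilde := by
  have hd : d ≠ 0 := by
    rintro rfl
    simpa [Subsingleton.elim (z 0) 0] using hz 0
  set s := ‖ptilde - z 0‖ / ‖p - z 0‖
  have hratio : ∀ ℓ, ‖ptilde - z ℓ‖ = s * ‖p - z ℓ‖ := fun ℓ =>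
    (div_eq_iff (norm_sub_pos_of_norm_lt_one hp (hz ℓ)).ne').mp <|
      norm_sub_div_eq_of_mul_poissonBall_eq hd hω.ne' ha hp hptilde (hz ℓ) (hz 0) (heq ℓ) (heq 0)
  have hplane : ∀ ℓ,
      ⟪z ℓ, s ^ 2 • p - ptilde⟫ = (s ^ 2 * (‖p‖ ^ 2 + 1) - (‖ptilde‖ ^ 2 + 1)) / 2 :=
    fun ℓ => inner_smul_sub_eq_of_norm_sub_eq_mul (hz ℓ) (hratio ℓ)
  have hv : s ^ 2 • p - ptilde = 0 := by
    by_contra hv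
    exact hnoplane ⟨_, hv, _, hplane⟩
  have hnorm : s ^ 2 * (‖p‖ ^ 2 + 1) = ‖ptilde‖ ^ 2 + 1 := by
    have h0 := hplane 0
    rw [hv, inner_zero_right] at h0
    linarith
  have hs : 0 < s := div_pos (norm_sub_pos_of_norm_lt_one hptilde (hz 0))
    (norm_sub_pos_of_norm_lt_one hp (hz 0))
  exact (eq_of_eq_smul_of_norm_lt_one hp hptilde (by positivity)
    (sub_eq_zero.mp hv).symm hnorm).symm

/-- `(d+1)`-point rigidity of the Poisson kernel on the unit ball in `ℝᵈ`:
if the observation points on the sphere do not lie on a common affine hyperplane,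
then proportional Poisson kernel data forces the two source points to coincide. -/
theorem poisson_ball_rigidity {d : ℕ} (hd : 2 ≤ d)
    (ω : ℝ) (hω : 0 < ω)
    (p ptilde : EuclideanSpace ℝ (Fin d))
    (hp : ‖p‖ < 1) (hptilde : ‖ptilde‖ < 1)
    (a b : ℝ) (ha : a ≠ 0) (hb : b ≠ 0)
    (z : Fin (d + 1) → EuclideanSpace ℝ (Fin d))
    (hz : ∀ ℓ, ‖z ℓ‖ = 1)
    (hnoplane : ¬ ∃ v : EuclideanSpace ℝ (Fin d), v ≠ 0 ∧ ∃ c : ℝ,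
      ∀ ℓ, ⟪z ℓ, v⟫ = c)
    (heq : ∀ ℓ, a * poissonBall d ω p (z ℓ) = b * poissonBall d ω ptilde (z ℓ)) :
    p = ptilde :=
  poisson_ball_rigidity_general ω hω p ptilde hp hptilde a b ha z hz hnoplane heq
end

section
/- Let $\{\lambda_n\}_{n \geq 1}$ be a strictly increasing sequence of positive reals tending to infinity, and let $\{a_n\}$ be a real sequence with $\sum_n |a_n| e^{-\lambda_n t_0} < \infty$ for some $t_0 > 0$. If $\sum_{n=1}^{\infty} a_n e^{-\lambda_n t} = 0$ for all $t$ in some nonempty open interval $(\alpha, \beta) \subset (t_0, \infty)$, then $a_n = 0$ for every $n$. -/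
/-!
The series `F(s) = ∑ aₙ e^{-λₙ s}` converges normally on the half-plane `re s > t₀`, so it is
holomorphic there; since it vanishes on a real interval, the identity theorem makes it vanish
for every real `t > t₀`. If `a₀ = ⋯ = aₙ₋₁ = 0`, then `e^{λₙ t} F(t) → aₙ` as `t → ∞` by
dominated convergence, because `λₖ > λₙ` for `k > n`; hence `aₙ = 0` by strong induction.
-/

open Complex Filter Set Topology

theorem DifferentiableOn.eqOn_zero_of_forall_Ioo_eq_zero {f : ℂ → ℂ} {U : Set ℂ}
    (hf : DifferentiableOn ℂ f U) (hU : IsOpen U) (hUc : IsPreconnected U) {α β : ℝ}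
    (hαβ : α < β) (hsub : ∀ t ∈ Ioo α β, (t : ℂ) ∈ U) (hzero : ∀ t ∈ Ioo α β, f t = 0) :
    EqOn f 0 U := by
  obtain ⟨x, hx⟩ := nonempty_Ioo.2 hαβ
  have hreal : ∀ᶠ t : ℝ in 𝓝[≠] x, f t = 0 :=
    eventually_nhdsWithin_of_eventually_nhds (eventually_of_mem (Ioo_mem_nhds hx.1 hx.2) hzero)
  have hmap : Tendsto ((↑) : ℝ → ℂ) (𝓝[≠] x) (𝓝[≠] (x : ℂ)) :=
    continuous_ofReal.continuousWithinAt.tendsto_nhdsWithin fun _ ht => by simpa using ht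
  exact (hf.analyticOnNhd hU).eqOn_zero_of_preconnected_of_frequently_eq_zero hUc (hsub x hx)
    (hmap.frequently (p := fun z => f z = 0) hreal.frequently)

noncomputable def dirichletSeries (a lam : ℕ → ℝ) (s : ℂ) : ℂ :=
  ∑' n, (a n : ℂ) * cexp (-(lam n : ℂ) * s)

theorem dirichletSeries_ofReal (a lam : ℕ → ℝ) (t : ℝ) :
    dirichletSeries a lam t = ((∑' n, a n * Real.exp (-lam n * t) : ℝ) : ℂ) := by
  rw [dirichletSeries, ofReal_tsum]
  push_cast
  rfl

section
variable {a lam : ℕ → ℝ} {t0 : ℝ}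

theorem norm_ofReal_mul_cexp_le (hlam : ∀ n, 0 ≤ lam n) {s : ℂ} (hs : t0 ≤ s.re) (n : ℕ) :
    ‖(a n : ℂ) * cexp (-(lam n : ℂ) * s)‖ ≤ |a n| * Real.exp (-lam n * t0) := by
  rw [norm_mul, norm_real, Real.norm_eq_abs, norm_exp]
  have hre : (-(lam n : ℂ) * s).re = -lam n * s.re := by simp
  rw [hre]
  gcongr |a n| * Real.exp ?_
  nlinarith [hlam n]

theorem differentiableOn_dirichletSeries (hlam : ∀ n, 0 ≤ lam n)
    (hsum : Summable fun n => |a n| * Real.exp (-lam n * t0)) :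
    DifferentiableOn ℂ (dirichletSeries a lam) {s | t0 < s.re} :=
  differentiableOn_tsum_of_summable_norm hsum
    (fun _ => ((differentiable_id.const_mul _).cexp.const_mul _).differentiableOn)
    (isOpen_lt continuous_const continuous_re)
    (fun n _ hs => norm_ofReal_mul_cexp_le hlam hs.le n)

theorem tendsto_exp_mul_tsum_of_forall_lt_eq_zero (hmono : StrictMono lam)
    (hsum : Summable fun n => |a n| * Real.exp (-lam n * t0)) {n : ℕ}
    (hlt : ∀ k < n, a k = 0) :
    Tendsto (fun t => Real.exp (lam n * t) * ∑' k, a k * Real.exp (-lam k * t)) atTop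
      (𝓝 (a n)) := by
  have hshift : ∀ t k, Real.exp (lam n * t) * (a k * Real.exp (-lam k * t)) =
      a k * Real.exp (-(lam k - lam n) * t) := by
    intro t k
    rw [mul_left_comm, ← Real.exp_add]
    ring_nf
  simp_rw [← tsum_mul_left, hshift]
  rw [← tsum_ite_eq n a]
  refine tendsto_tsum_of_dominated_convergence (hsum.mul_right (Real.exp (lam n * t0)))
    (fun k => ?_) ?_
  · rcases lt_trichotomy k n with hk | rfl | hk
    · simp [hlt k hk]
    · simp
    · have hgap : -(lam k - lam n) < 0 := by linarith [hmono hk]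
      simpa [hk.ne'] using tendsto_const_nhds.mul
        (Real.tendsto_exp_atBot.comp (tendsto_id.const_mul_atTop_of_neg hgap))
  · filter_upwards [eventually_ge_atTop t0] with t ht k
    rcases lt_or_ge k n with hk | hk
    · simp [hlt k hk]
    · rw [mul_assoc, ← Real.exp_add, Real.norm_eq_abs, abs_mul, Real.abs_exp]
      gcongr
      nlinarith [hmono.monotone hk]

theorem eq_zero_of_tsum_mul_exp_eventually_eq_zero (hmono : StrictMono lam)
    (hsum : Summable fun n => |a n| * Real.exp (-lam n * t0))
    (hzero : ∀ᶠ t in atTop, ∑' n, a n * Real.exp (-lam n * t) = 0) (n : ℕ) : a n = 0 := by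
  induction n using Nat.strong_induction_on with
  | _ n ih =>
    refine tendsto_nhds_unique (tendsto_exp_mul_tsum_of_forall_lt_eq_zero hmono hsum ih) ?_
    refine tendsto_const_nhds.congr' ?_
    filter_upwards [hzero] with t ht
    rw [ht, mul_zero]

end

theorem dirichlet_series_uniqueness_general
    (lam : ℕ → ℝ) (hpos : ∀ n, 0 < lam n) (hmono : StrictMono lam)
    (a : ℕ → ℝ) (t0 : ℝ)
    (hsum : Summable fun n => |a n| * Real.exp (-lam n * t0))
    (α β : ℝ) (hαβ : α < β) (ht0α : t0 < α)
    (hzero : ∀ t ∈ Set.Ioo α β, ∑' n, a n * Real.exp (-lam n * t) = 0) :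
    ∀ n, a n = 0 := by
  have hF : EqOn (dirichletSeries a lam) 0 {s | t0 < s.re} :=
    (differentiableOn_dirichletSeries (fun n => (hpos n).le) hsum).eqOn_zero_of_forall_Ioo_eq_zero
      (isOpen_lt continuous_const continuous_re) (convex_halfSpace_re_gt t0).isPreconnected hαβ
      (fun t ht => by simpa using ht0α.trans ht.1)
      (fun t ht => by rw [dirichletSeries_ofReal, hzero t ht, ofReal_zero])
  refine eq_zero_of_tsum_mul_exp_eventually_eq_zero hmono hsum ?_
  filter_upwards [eventually_gt_atTop t0] with t ht
  have h := hF (show t0 < (t : ℂ).re by simpa using ht)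
  rwa [dirichletSeries_ofReal, Pi.zero_apply, ofReal_eq_zero] at h

/-- Uniqueness of generalized Dirichlet series: if `∑ aₙ e^{-λₙ t}` is absolutely
convergent for some `t₀ > 0` and vanishes on a nonempty open interval in `(t₀, ∞)`,
then all coefficients vanish. -/
theorem dirichlet_series_uniqueness
    (lam : ℕ → ℝ) (hpos : ∀ n, 0 < lam n) (hmono : StrictMono lam)
    (htop : Filter.Tendsto lam Filter.atTop Filter.atTop)
    (a : ℕ → ℝ) (t0 : ℝ) (ht0 : 0 < t0)
    (hsum : Summable fun n => |a n| * Real.exp (-lam n * t0))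
    (α β : ℝ) (hαβ : α < β) (ht0α : t0 < α)
    (hzero : ∀ t ∈ Set.Ioo α β, ∑' n, a n * Real.exp (-lam n * t) = 0) :
    ∀ n, a n = 0 :=
  dirichlet_series_uniqueness_general lam hpos hmono a t0 hsum α β hαβ ht0α hzero
end

section
/- Let $f : (0,\infty) \to \mathbb{R}$ be continuous with $|f(t)| \leq C e^{-\mu t}$ for some $C, \mu > 0$, and suppose its Laplace transform $\mathcal{L}f(s) = \int_0^\infty e^{-st} f(t)\,dt$ vanishes for all $s > 0$. Then $f \equiv 0$ on $(0,\infty)$. -/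
/-!
Put `g t = exp (-t) * (1 - exp (-t)) * f t`. Since `exp (-t) ^ n * g t` is a difference of the
Laplace kernels at `n + 1` and `n + 2`, all moments `∫ exp (-t) ^ n * g t` over `(0, ∞)` vanish.
Substituting `x = exp (-t)` writes `g t = K (exp (-t))`, and the two weights make `K` continuous
on `[0, 1]`: `exp (-t)` kills `f` at `t = ∞`, and `1 - exp (-t)` at `t = 0⁺`, where `f` need not
have a limit. Weierstrass approximation of `K` by polynomials then gives `∫ g ^ 2 = 0`, so the
continuous function `g`, and with it `f`, vanishes on `(0, ∞)`.
-/

open MeasureTheory Set Real Filter Topology Polynomial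

noncomputable def compNegLog (F : ℝ → ℝ) (x : ℝ) : ℝ :=
  if x ∈ Ioo 0 1 then F (-log x) else 0

theorem compNegLog_exp_neg (F : ℝ → ℝ) {t : ℝ} (ht : 0 < t) :
    compNegLog F (exp (-t)) = F t := by
  have hmem : exp (-t) ∈ Ioo 0 1 := ⟨exp_pos _, exp_lt_one_iff.2 (neg_lt_zero.2 ht)⟩
  simp [compNegLog, hmem]

theorem continuousOn_compNegLog {F : ℝ → ℝ} (hF : ContinuousOn F (Ioi 0))
    (h0 : Tendsto F (𝓝[>] 0) (𝓝 0)) (hinf : Tendsto F atTop (𝓝 0)) :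
    ContinuousOn (compNegLog F) (Icc 0 1) := by
  have heq : compNegLog F =ᶠ[𝓟 (Ioo 0 1)] fun x => F (-log x) :=
    eventuallyEq_principal.2 fun x hx => if_pos hx
  rintro x ⟨hx0, hx1⟩
  rcases hx0.eq_or_lt with rfl | hx0
  · have hlim : Tendsto (fun x => F (-log x)) (𝓝[>] 0) (𝓝 0) :=
      hinf.comp (tendsto_neg_atBot_atTop.comp tendsto_log_nhdsGT_zero)
    refine (continuousWithinAt_Ioi_iff_Ici.1 ?_).mono Icc_subset_Ici_self
    rw [ContinuousWithinAt, show compNegLog F 0 = 0 by simp [compNegLog]]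
    exact hlim.congr' (heq.filter_mono (le_principal_iff.2 (Ioo_mem_nhdsGT one_pos))).symm
  rcases hx1.eq_or_lt with rfl | hx1
  · have hlog : Tendsto (fun x => -log x) (𝓝[<] 1) (𝓝[>] 0) := by
      refine tendsto_nhdsWithin_iff.2 ⟨?_, ?_⟩
      · simpa using (continuousAt_log one_ne_zero).tendsto.neg.mono_left nhdsWithin_le_nhds
      · filter_upwards [Ioo_mem_nhdsLT one_pos] with x hx
        exact neg_pos.2 (log_neg hx.1 hx.2)
    refine (continuousWithinAt_Iio_iff_Iic.1 ?_).mono Icc_subset_Iic_self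
    rw [ContinuousWithinAt, show compNegLog F 1 = 0 by simp [compNegLog]]
    exact (h0.comp hlog).congr' (heq.filter_mono (le_principal_iff.2 (Ioo_mem_nhdsLT one_pos))).symm
  · have hx : Ioo 0 1 ∈ 𝓝 x := Ioo_mem_nhds hx0 hx1
    have hlog : ContinuousAt (fun x => -log x) x := (continuousAt_log hx0.ne').neg
    have hcont : ContinuousAt (fun x => F (-log x)) x :=
      ContinuousAt.comp (g := F)
        (hF.continuousAt (Ioi_mem_nhds (neg_pos.2 (log_neg hx0 hx1)))) hlog
    exact (hcont.congr (heq.filter_mono (le_principal_iff.2 hx)).symm).continuousWithinAt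

section Moments

variable {α : Type*} [MeasurableSpace α] {μ : Measure α} {φ g : α → ℝ}

theorem integral_eval_mul_eq_zero_of_forall_integral_pow_mul_eq_zero (hφ : AEMeasurable φ μ)
    (hφI : ∀ᵐ x ∂μ, φ x ∈ Icc 0 1) (hg : Integrable g μ)
    (hmom : ∀ n : ℕ, ∫ x, φ x ^ n * g x ∂μ = 0) (p : ℝ[X]) :
    ∫ x, p.eval (φ x) * g x ∂μ = 0 := by
  have hint (n : ℕ) : Integrable (fun x => φ x ^ n * g x) μ :=
    hg.bdd_mul (hφ.pow_const n).aestronglyMeasurable (c := 1) <| hφI.mono fun x hx => by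
      rw [norm_pow, Real.norm_of_nonneg hx.1]; exact pow_le_one₀ hx.1 hx.2
  simp_rw [eval_eq_sum_range, Finset.sum_mul, mul_assoc]
  rw [integral_finsetSum _ fun i _ => (hint i).const_mul _]
  simp [integral_const_mul, hmom]

theorem ae_eq_zero_of_forall_integral_pow_mul_eq_zero {K : ℝ → ℝ} (hφ : AEMeasurable φ μ)
    (hφI : ∀ᵐ x ∂μ, φ x ∈ Icc 0 1) (hK : ContinuousOn K (Icc 0 1))
    (hgK : ∀ᵐ x ∂μ, g x = K (φ x)) (hg : Integrable g μ)
    (hmom : ∀ n : ℕ, ∫ x, φ x ^ n * g x ∂μ = 0) : g =ᵐ[μ] 0 := by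
  have hint {h : ℝ → ℝ} (hh : ContinuousOn h (Icc 0 1))
      (hhφ : AEStronglyMeasurable (fun x => h (φ x)) μ) :
      Integrable (fun x => h (φ x) * g x) μ := by
    obtain ⟨M, hM⟩ := isCompact_Icc.exists_bound_of_continuousOn hh
    exact hg.bdd_mul hhφ (hφI.mono fun x hx => hM _ hx)
  have hsq : Integrable (fun x => g x * g x) μ :=
    (hint hK (hg.1.congr hgK)).congr (hgK.mono fun x hx => by simp only [← hx])
  set A := ∫ x, |g x| ∂μ
  have hA : 0 ≤ A := integral_nonneg fun x => abs_nonneg _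
  have hle (ε : ℝ) (hε : 0 < ε) : ∫ x, g x * g x ∂μ ≤ 0 + ε := by
    obtain ⟨p, hp⟩ :=
      exists_polynomial_near_of_continuousOn 0 1 K hK (ε / (A + 1)) (by positivity)
    have hpint : Integrable (fun x => p.eval (φ x) * g x) μ :=
      hint p.continuous.continuousOn
        (p.continuous.measurable.comp_aemeasurable hφ).aestronglyMeasurable
    calc ∫ x, g x * g x ∂μ = ∫ x, (g x - p.eval (φ x)) * g x ∂μ := by
          simp_rw [sub_mul]
          rw [integral_sub hsq hpint,
            integral_eval_mul_eq_zero_of_forall_integral_pow_mul_eq_zero hφ hφI hg hmom, sub_zero]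
      _ ≤ ∫ x, ε / (A + 1) * |g x| ∂μ := by
          refine integral_mono_ae (hsq.sub hpint |>.congr ?_) (hg.abs.const_mul _) ?_
          · exact .of_forall fun x => by simp only [Pi.sub_apply, sub_mul]
          filter_upwards [hφI, hgK] with x hx hx'
          calc (g x - p.eval (φ x)) * g x ≤ |g x - p.eval (φ x)| * |g x| := by
                rw [← abs_mul]; exact le_abs_self _
            _ ≤ ε / (A + 1) * |g x| := by
                gcongr
                rw [hx', abs_sub_comm]; exact (hp _ hx).le
      _ = ε / (A + 1) * A := integral_const_mul _ _
      _ ≤ 0 + ε := by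
          rw [zero_add, div_mul_eq_mul_div, div_le_iff₀ (by positivity)]; nlinarith
  have hzero : ∫ x, g x * g x ∂μ = 0 :=
    le_antisymm (le_of_forall_pos_le_add hle) (integral_nonneg fun x => mul_self_nonneg _)
  filter_upwards [(integral_eq_zero_iff_of_nonneg (fun x => mul_self_nonneg (g x)) hsq).1 hzero]
    with x hx
  exact mul_self_eq_zero.1 hx

end Moments

noncomputable def laplaceTransform (f : ℝ → ℝ) (s : ℝ) : ℝ :=
  ∫ t in Ioi 0, exp (-s * t) * f t

theorem integrableOn_exp_neg_mul_of_abs_le {f : ℝ → ℝ} {a B s : ℝ}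
    (hf : ContinuousOn f (Ioi a)) (hB : ∀ t ∈ Ioi a, |f t| ≤ B) (hs : 0 < s) :
    IntegrableOn (fun t => exp (-s * t) * f t) (Ioi a) :=
  (exp_neg_integrableOn_Ioi a hs).mul_bdd (hf.aestronglyMeasurable measurableSet_Ioi)
    ((ae_restrict_iff' measurableSet_Ioi).2 (.of_forall hB))

theorem exp_neg_pow_mul_one_sub_exp_neg_mul (f : ℝ → ℝ) (t : ℝ) (n : ℕ) :
    exp (-t) ^ n * (exp (-t) * (1 - exp (-t)) * f t) =
      exp (-(n + 1) * t) * f t - exp (-(n + 2) * t) * f t := by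
  have h2 : -((n : ℝ) + 2) * t = -((n : ℝ) + 1) * t + -t := by ring
  have h1 : -((n : ℝ) + 1) * t = n * -t + -t := by ring
  rw [h2, exp_add, h1, exp_add, exp_nat_mul]
  ring

section OneSubExpNeg

variable {f : ℝ → ℝ} {B : ℝ}

theorem integrableOn_exp_neg_pow_mul_one_sub_exp_neg_mul (hf : ContinuousOn f (Ioi 0))
    (hB : ∀ t ∈ Ioi 0, |f t| ≤ B) (n : ℕ) :
    IntegrableOn (fun t => exp (-t) ^ n * (exp (-t) * (1 - exp (-t)) * f t)) (Ioi 0) := by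
  simp_rw [exp_neg_pow_mul_one_sub_exp_neg_mul]
  exact (integrableOn_exp_neg_mul_of_abs_le hf hB (by positivity)).sub
    (integrableOn_exp_neg_mul_of_abs_le hf hB (by positivity))

theorem integral_exp_neg_pow_mul_one_sub_exp_neg_mul (hf : ContinuousOn f (Ioi 0))
    (hB : ∀ t ∈ Ioi 0, |f t| ≤ B) (n : ℕ) :
    ∫ t in Ioi 0, exp (-t) ^ n * (exp (-t) * (1 - exp (-t)) * f t) =
      laplaceTransform f (n + 1) - laplaceTransform f (n + 2) := by
  simp_rw [exp_neg_pow_mul_one_sub_exp_neg_mul]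
  rw [integral_sub (integrableOn_exp_neg_mul_of_abs_le hf hB (by positivity))
    (integrableOn_exp_neg_mul_of_abs_le hf hB (by positivity))]
  rfl

theorem continuousOn_compNegLog_one_sub_exp_neg_mul (hf : ContinuousOn f (Ioi 0))
    (hB : ∀ t ∈ Ioi 0, |f t| ≤ B) :
    ContinuousOn (compNegLog fun t => exp (-t) * (1 - exp (-t)) * f t) (Icc 0 1) := by
  have hw : Continuous fun t => exp (-t) * (1 - exp (-t)) := by fun_prop
  have hw0 : Tendsto (fun t => exp (-t) * (1 - exp (-t))) (𝓝[>] 0) (𝓝 0) := by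
    simpa using (hw.tendsto 0).mono_left nhdsWithin_le_nhds
  have hw_top : Tendsto (fun t => exp (-t) * (1 - exp (-t))) atTop (𝓝 0) := by
    simpa using tendsto_exp_neg_atTop_nhds_zero.mul (tendsto_exp_neg_atTop_nhds_zero.const_sub 1)
  have hf_bdd {l : Filter ℝ} (hl : Ioi 0 ∈ l) : IsBoundedUnder (· ≤ ·) l (norm ∘ f) :=
    isBoundedUnder_of_eventually_le (mem_of_superset hl hB)
  exact continuousOn_compNegLog (hw.continuousOn.mul hf)
    (hw0.zero_mul_isBoundedUnder_le (hf_bdd self_mem_nhdsWithin))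
    (hw_top.zero_mul_isBoundedUnder_le (hf_bdd (Ioi_mem_atTop 0)))

end OneSubExpNeg

/-- Injectivity of the Laplace transform for exponentially decaying continuous
functions: if `ℒf(s) = 0` for all `s > 0` then `f ≡ 0` on `(0,∞)`. -/
theorem laplace_transform_injective
    (f : ℝ → ℝ) (hf : ContinuousOn f (Set.Ioi 0))
    (C μ : ℝ) (hC : 0 < C) (hμ : 0 < μ)
    (hdecay : ∀ t : ℝ, 0 < t → |f t| ≤ C * Real.exp (-μ * t))
    (hlap : ∀ s : ℝ, 0 < s → ∫ t in Set.Ioi (0 : ℝ), Real.exp (-s * t) * f t = 0) :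
    ∀ t : ℝ, 0 < t → f t = 0 := by
  have hB : ∀ t ∈ Ioi 0, |f t| ≤ C := fun t ht => (hdecay t ht).trans <|
    mul_le_of_le_one_right hC.le (exp_le_one_iff.2 (by nlinarith [mem_Ioi.1 ht]))
  set w : ℝ → ℝ := fun t => exp (-t) * (1 - exp (-t))
  have hwf : ContinuousOn (fun t => w t * f t) (Ioi 0) := by fun_prop
  have hmom (n : ℕ) : ∫ t in Ioi 0, exp (-t) ^ n * (w t * f t) = 0 := by
    rw [integral_exp_neg_pow_mul_one_sub_exp_neg_mul hf hB, laplaceTransform,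
      laplaceTransform, hlap _ (by positivity), hlap _ (by positivity), sub_zero]
  have hae : (fun t => w t * f t) =ᵐ[volume.restrict (Ioi 0)] 0 :=
    ae_eq_zero_of_forall_integral_pow_mul_eq_zero (by fun_prop)
      (ae_restrict_of_forall_mem measurableSet_Ioi fun t ht =>
        ⟨(exp_pos _).le, exp_le_one_iff.2 (neg_nonpos.2 ht.le)⟩)
      (continuousOn_compNegLog_one_sub_exp_neg_mul hf hB)
      (ae_restrict_of_forall_mem measurableSet_Ioi fun t ht =>
        (compNegLog_exp_neg (fun t => w t * f t) ht).symm)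
      (by simpa [w, IntegrableOn] using integrableOn_exp_neg_pow_mul_one_sub_exp_neg_mul hf hB 0)
      hmom
  intro t ht
  have hwt : w t ≠ 0 :=
    mul_ne_zero (exp_pos _).ne' (sub_ne_zero.2 (exp_lt_one_iff.2 (neg_lt_zero.2 ht)).ne')
  have hwft : w t * f t = 0 :=
    Measure.eqOn_open_of_ae_eq hae isOpen_Ioi hwf continuousOn_const ht
  exact (mul_eq_zero.1 hwft).resolve_left hwt
end
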